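/- arXiv:1908.06939 — 3 statements merged into one kernel-verified Lean document; each statement's English description precedes it below -/
import Mathlib

section
/- Let V be the space of polynomials over a field K, and let (\phi_i)_{i \ge 0} be linear functionals on K[x] such that for every polynomial f of degree n, \phi_n(f) \ne 0 whenever the leading coefficient of f is nonzero, and \phi_i(f) = 0 for i > n (i.e., \phi_i lowers degree appropriately, as for \phi_i(f) = \varepsilon_{z_i}(\partial^i f) with a degree-lowering operator \partial). Then there exists a unique sequence of polynomials (f_n)_{n \ge 0} with deg f_n = n satisfying \phi_i(f_n) = [n]_q! \, \delta_{i,n} for all i, n, and this sequence is a basis of K[x]: every polynomial g satisfies g = \sum_{j=0}^{\deg g} \frac{\phi_j(g)}{[j]_q!} f_j. -/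
/-!
Since `φ f.natDegree f ≠ 0` for `f ≠ 0`, a polynomial is determined by its values under all
the `φ i`; this gives uniqueness and, applied to `g - ∑ (φ j g / [j]_q!) • f j`, the expansion.
For existence, `φ 0, …, φ n` restricted to polynomials of degree `≤ n` is injective (the `φ i`
with `i > n` vanish there), hence bijective by counting dimensions; `f n` is the preimage of
`[n]_q!` times the last basis vector, and has degree exactly `n` because `φ n (f n) ≠ 0`.
-/

open Polynomial Finset

/-- `[n]_q = (1 - q^n)/(1 - q)`. -/
def qNat {K : Type*} [Field K] (q : K) (n : ℕ) : K := (1 - q ^ n) / (1 - q)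

/-- `[n]_q! = [1]_q [2]_q ⋯ [n]_q`. -/
def qFact {K : Type*} [Field K] (q : K) (n : ℕ) : K :=
  ∏ k ∈ Finset.range n, qNat q (k + 1)

theorem natDegree_le_of_mem_degreeLT_succ {R : Type*} [Semiring R] {n : ℕ} {p : R[X]}
    (hp : p ∈ degreeLT R (n + 1)) : p.natDegree ≤ n :=
  natDegree_le_iff_coeff_eq_zero.mpr fun _ hN =>
    (degree_lt_iff_coeff_zero p (n + 1)).mp (mem_degreeLT.mp hp) _ hN

section TriangularFunctionals

variable {K : Type*} [Field K] {φ : ℕ → K[X] →ₗ[K] K}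

theorem eq_zero_of_forall_apply_eq_zero
    (hdiag : ∀ f : K[X], f.leadingCoeff ≠ 0 → φ f.natDegree f ≠ 0) {f : K[X]}
    (hf : ∀ i, φ i f = 0) : f = 0 := by
  by_contra hf0
  exact hdiag f (leadingCoeff_ne_zero.mpr hf0) (hf _)

theorem eq_of_forall_apply_eq
    (hdiag : ∀ f : K[X], f.leadingCoeff ≠ 0 → φ f.natDegree f ≠ 0) {f g : K[X]}
    (h : ∀ i, φ i f = φ i g) : f = g :=
  sub_eq_zero.mp <| eq_zero_of_forall_apply_eq_zero hdiag fun i => by rw [map_sub, h, sub_self]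

theorem apply_eq_zero_of_mem_degreeLT
    (htri : ∀ f : K[X], ∀ i : ℕ, f.natDegree < i → φ i f = 0) {n i : ℕ} {p : K[X]}
    (hp : p ∈ degreeLT K (n + 1)) (hi : n < i) : φ i p = 0 :=
  htri p i <| (natDegree_le_of_mem_degreeLT_succ hp).trans_lt hi

noncomputable def restrictDegreeLT (φ : ℕ → K[X] →ₗ[K] K) (n : ℕ) :
    degreeLT K (n + 1) →ₗ[K] Fin (n + 1) → K :=
  LinearMap.pi fun i => φ i ∘ₗ (degreeLT K (n + 1)).subtype

theorem surjective_restrictDegreeLT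
    (hdiag : ∀ f : K[X], f.leadingCoeff ≠ 0 → φ f.natDegree f ≠ 0)
    (htri : ∀ f : K[X], ∀ i : ℕ, f.natDegree < i → φ i f = 0) (n : ℕ) :
    Function.Surjective (restrictDegreeLT φ n) := by
  have hfinrank : Module.finrank K (degreeLT K (n + 1)) = Module.finrank K (Fin (n + 1) → K) :=
    (degreeLTEquiv K (n + 1)).finrank_eq
  refine (LinearMap.injective_iff_surjective_of_finrank_eq_finrank hfinrank).mp ?_
  rw [← LinearMap.ker_eq_bot, LinearMap.ker_eq_bot']
  rintro ⟨p, hp⟩ hφp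
  refine Subtype.ext <| eq_zero_of_forall_apply_eq_zero hdiag fun i => ?_
  rcases le_or_gt i n with hin | hni
  · exact congrFun hφp ⟨i, Nat.lt_succ_of_le hin⟩
  · exact apply_eq_zero_of_mem_degreeLT htri hp hni

theorem exists_natDegree_eq_and_apply_eq_ite
    (hdiag : ∀ f : K[X], f.leadingCoeff ≠ 0 → φ f.natDegree f ≠ 0)
    (htri : ∀ f : K[X], ∀ i : ℕ, f.natDegree < i → φ i f = 0) {n : ℕ} {c : K} (hc : c ≠ 0) :
    ∃ p : K[X], p.natDegree = n ∧ ∀ i, φ i p = if i = n then c else 0 := by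
  obtain ⟨⟨p, hp⟩, hφp⟩ := surjective_restrictDegreeLT hdiag htri n (Pi.single (Fin.last n) c)
  have hφp_apply : ∀ i, φ i p = if i = n then c else 0 := by
    intro i
    rcases le_or_gt i n with hin | hni
    · simpa [restrictDegreeLT, Pi.single_apply, Fin.ext_iff] using
        congrFun hφp ⟨i, Nat.lt_succ_of_le hin⟩
    · rw [apply_eq_zero_of_mem_degreeLT htri hp hni, if_neg hni.ne']
  refine ⟨p, le_antisymm (natDegree_le_of_mem_degreeLT_succ hp) ?_, hφp_apply⟩
  by_contra! hlt
  exact hc (by simpa using (hφp_apply n).symm.trans (htri p n hlt))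

theorem exists_seq_natDegree_eq_and_apply_eq_ite
    (hdiag : ∀ f : K[X], f.leadingCoeff ≠ 0 → φ f.natDegree f ≠ 0)
    (htri : ∀ f : K[X], ∀ i : ℕ, f.natDegree < i → φ i f = 0) {c : ℕ → K} (hc : ∀ n, c n ≠ 0) :
    ∃ F : ℕ → K[X], (∀ n, (F n).natDegree = n) ∧
      ∀ i n, φ i (F n) = if i = n then c n else 0 := by
  choose F hdeg hF using fun n => exists_natDegree_eq_and_apply_eq_ite hdiag htri (hc n)
  exact ⟨F, hdeg, fun i n => hF n i⟩

theorem apply_sum_smul_of_apply_eq_ite {c : ℕ → K} (hc : ∀ n, c n ≠ 0) {F : ℕ → K[X]}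
    (hF : ∀ i n, φ i (F n) = if i = n then c n else 0) (a : ℕ → K) (s : Finset ℕ) (i : ℕ) :
    φ i (∑ j ∈ s, (a j / c j) • F j) = if i ∈ s then a i else 0 := by
  simp only [map_sum, map_smul, hF, smul_eq_mul, mul_ite, mul_zero]
  rw [sum_ite_eq, ite_congr rfl (fun _ => div_mul_cancel₀ _ (hc i)) fun _ => rfl]

theorem eq_sum_range_smul_of_apply_eq_ite
    (hdiag : ∀ f : K[X], f.leadingCoeff ≠ 0 → φ f.natDegree f ≠ 0)
    (htri : ∀ f : K[X], ∀ i : ℕ, f.natDegree < i → φ i f = 0) {c : ℕ → K} (hc : ∀ n, c n ≠ 0)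
    {F : ℕ → K[X]} (hF : ∀ i n, φ i (F n) = if i = n then c n else 0) (g : K[X]) :
    g = ∑ j ∈ range (g.natDegree + 1), (φ j g / c j) • F j := by
  refine eq_of_forall_apply_eq hdiag fun i => ?_
  rw [apply_sum_smul_of_apply_eq_ite hc hF]
  split_ifs with hi
  · rfl
  · exact htri g i (by simpa [Nat.lt_succ_iff] using hi)

end TriangularFunctionals

/-- existence and uniqueness of a polynomial sequence
q-biorthogonal to a degree-triangular sequence of linear functionals, and
the basis expansion property. -/
theorem biorthogonal_basis_exists_unique {K : Type*} [Field K] (q : K)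
    (hq : ∀ n : ℕ, qFact q n ≠ 0)
    (φ : ℕ → (Polynomial K →ₗ[K] K))
    (hdiag : ∀ f : Polynomial K, f.leadingCoeff ≠ 0 → φ f.natDegree f ≠ 0)
    (htri : ∀ f : Polynomial K, ∀ i : ℕ, f.natDegree < i → φ i f = 0) :
    (∃! F : ℕ → Polynomial K,
        (∀ n, (F n).natDegree = n) ∧
        (∀ i n : ℕ, φ i (F n) = if i = n then qFact q n else 0)) ∧
    (∀ F : ℕ → Polynomial K,
        (∀ n, (F n).natDegree = n) →
        (∀ i n : ℕ, φ i (F n) = if i = n then qFact q n else 0) →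
        ∀ g : Polynomial K,
          g = ∑ j ∈ Finset.range (g.natDegree + 1), (φ j g / qFact q j) • F j) := by
  obtain ⟨F, hdeg, hF⟩ := exists_seq_natDegree_eq_and_apply_eq_ite hdiag htri hq
  refine ⟨⟨F, ⟨hdeg, hF⟩, ?_⟩, fun G _ hG => eq_sum_range_smul_of_apply_eq_ite hdiag htri hq hG⟩
  rintro G ⟨-, hG⟩
  exact funext fun n => eq_of_forall_apply_eq hdiag fun i => by rw [hG, hF]
end

section
/- Let K[x] be polynomials over a field K and \partial : K[x] \to K[x] a linear operator satisfying deg(\partial f) = deg(f) - 1 for all nonconstant f and \partial(c) = 0 for constants c, and suppose (p_n)_{n \ge 0} satisfies p_0 = 1, deg p_n = n, p_n(0) = 0 for n \ge 1, and \partial p_n = [n]_q p_{n-1}. Then \varepsilon_0(\partial^i p_n) = [n]_q! \delta_{i,n} for all 0 \le i, n. -/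
open Polynomial Finset

/-! Each application of `∂` lowers the index of `pₙ` by one and contributes the scalar `[n]_q`,
so `∂^i pₙ` is a multiple of `p_{n-i}` for `i ≤ n` and vanishes for `i > n` since `∂ p₀ = 0`.
Evaluating at `0` kills every `p_m` with `m ≥ 1` and leaves `[n]_q! · p₀(0) = [n]_q!` when `i = n`. -/

namespace Module.End

section LoweringSequence

variable {R M : Type*} [CommSemiring R] [AddCommMonoid M] [Module R M]
  (D : Module.End R M) {p : ℕ → M} {c : ℕ → R}

theorem pow_apply_add_eq_prod_smul (hD : ∀ n, D (p (n + 1)) = c (n + 1) • p n) (i n : ℕ) :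
    (D ^ i) (p (n + i)) = (∏ k ∈ range i, c (n + k + 1)) • p n := by
  induction i with
  | zero => simp
  | succ i ih =>
    rw [pow_succ, mul_apply, ← add_assoc, hD, map_smul, ih, smul_smul, prod_range_succ_comm]

theorem pow_apply_self_eq_prod_smul (hD : ∀ n, D (p (n + 1)) = c (n + 1) • p n) (n : ℕ) :
    (D ^ n) (p n) = (∏ k ∈ range n, c (k + 1)) • p 0 := by
  simpa using pow_apply_add_eq_prod_smul D hD n 0

theorem pow_apply_eq_zero_of_lt (hD : ∀ n, D (p (n + 1)) = c (n + 1) • p n) (hD0 : D (p 0) = 0)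
    {i n : ℕ} (hni : n < i) : (D ^ i) (p n) = 0 := by
  obtain ⟨m, rfl⟩ : ∃ m, i = m + 1 + n := ⟨i - (n + 1), by omega⟩
  rw [pow_add, mul_apply, pow_apply_self_eq_prod_smul D hD, map_smul, pow_succ, mul_apply, hD0,
    map_zero, smul_zero]

end LoweringSequence

end Module.End

open Module.End in
theorem basic_sequence_biorthogonal_general {K : Type*} [Field K] (q : K)
    (D : Polynomial K →ₗ[K] Polynomial K)
    (hDconst : ∀ c : K, D (Polynomial.C c) = 0)
    (p : ℕ → Polynomial K)
    (hp0 : p 0 = 1)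
    (hpeval : ∀ n : ℕ, 1 ≤ n → (p n).eval 0 = 0)
    (hDp : ∀ n : ℕ, D (p (n + 1)) = qNat q (n + 1) • p n) :
    ∀ i n : ℕ, ((D ^ i) (p n)).eval 0 = if i = n then qFact q n else 0 := by
  intro i n
  rcases lt_trichotomy i n with hlt | rfl | hgt
  · obtain ⟨m, rfl⟩ := Nat.exists_eq_add_of_lt hlt
    rw [if_neg hlt.ne, show i + m + 1 = m + 1 + i by ring, pow_apply_add_eq_prod_smul D hDp,
      eval_smul, hpeval (m + 1) (by omega), smul_zero]
  · rw [if_pos rfl, pow_apply_self_eq_prod_smul D hDp, hp0, eval_smul, eval_one, smul_eq_mul,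
      mul_one, qFact]
  · have hDp0 : D (p 0) = 0 := by rw [hp0, ← C_1, hDconst]
    rw [if_neg hgt.ne', pow_apply_eq_zero_of_lt D hDp hDp0 hgt, eval_zero]

/-- the basic sequence of a q-delta operator is biorthogonal to
evaluation at 0 composed with powers of the operator:
`ε₀(∂^i pₙ) = [n]_q! δ_{i,n}`. -/
theorem basic_sequence_biorthogonal {K : Type*} [Field K] (q : K)
    (hq : ∀ n : ℕ, 1 ≤ n → q ^ n ≠ 1)
    (D : Polynomial K →ₗ[K] Polynomial K)
    (hDdeg : ∀ f : Polynomial K, 0 < f.natDegree → (D f).natDegree = f.natDegree - 1)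
    (hDconst : ∀ c : K, D (Polynomial.C c) = 0)
    (p : ℕ → Polynomial K)
    (hp0 : p 0 = 1)
    (hpdeg : ∀ n, (p n).natDegree = n)
    (hpeval : ∀ n : ℕ, 1 ≤ n → (p n).eval 0 = 0)
    (hDp : ∀ n : ℕ, D (p (n + 1)) = qNat q (n + 1) • p n) :
    ∀ i n : ℕ, ((D ^ i) (p n)).eval 0 = if i = n then qFact q n else 0 :=
  basic_sequence_biorthogonal_general q D hDconst p hp0 hpeval hDp
end

section
/- If in the composition formula T_n = \sum_{k=1}^n \sum_{(b_1,...,b_k) \models n} \prod_{i=1}^k \binom{s_i}{b_i}_q \cdot c_{b_i, s_i} one sets all weights c_{b,s} = 1, then T_n satisfies T_n = \sum_{k=0}^{n-1} \binom{n}{k}_q T_k with T_0 = 1; i.e., the number of weighted monomials in the constant term of the n-th generalized q-Gončarov polynomial is the q-Fubini number f_{n,q}. -/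
open Polynomial Finset

/-- The Gaussian (q-)binomial coefficient as a polynomial in `q` over `ℤ`,
via the q-Pascal recurrence. -/
noncomputable def qBin : ℕ → ℕ → Polynomial ℤ
  | _, 0 => 1
  | 0, _ + 1 => 0
  | n + 1, k + 1 => qBin n k + Polynomial.X ^ (k + 1) * qBin n (k + 1)

/-- For a list of block sizes `(b₁, …, b_k)` with partial sums `sᵢ = b₁ + ⋯ + bᵢ`,
the product `∏ᵢ qBin sᵢ bᵢ`. -/
noncomputable def compProd (l : List ℕ) : Polynomial ℤ :=
  ∏ i ∈ Finset.range l.length, qBin ((l.take (i + 1)).sum) (l.getD i 0)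

/-!
Deleting the last block `b` of a composition of `n` leaves a composition of `k = n - b < n`, and
the product loses exactly its last factor `qBin n (n - k)`. By the symmetry
`qBin n (n - k) = qBin n k` of the Gaussian binomials (a consequence of the two q-Pascal rules),
summing over `k` gives the q-Fubini recurrence, which together with `T 0 = 1` determines the
sequence by strong induction.
-/

@[simp]
lemma qBin_zero_right (n : ℕ) : qBin n 0 = 1 := by cases n <;> rfl

lemma qBin_succ_succ (n k : ℕ) :
    qBin (n + 1) (k + 1) = qBin n k + X ^ (k + 1) * qBin n (k + 1) := rfl

lemma qBin_eq_zero_of_lt : ∀ {n k : ℕ}, n < k → qBin n k = 0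
  | 0, _ + 1, _ => rfl
  | _ + 1, _ + 1, h => by
    rw [qBin_succ_succ, qBin_eq_zero_of_lt (by omega), qBin_eq_zero_of_lt (by omega), mul_zero,
      add_zero]

@[simp]
lemma qBin_self : ∀ n : ℕ, qBin n n = 1
  | 0 => rfl
  | n + 1 => by
    rw [qBin_succ_succ, qBin_self n, qBin_eq_zero_of_lt n.lt_succ_self, mul_zero, add_zero]

/-- The second q-Pascal rule, written with `n = a + b` and `k = a` to avoid subtraction. -/
lemma qBin_succ_succ' : ∀ a b : ℕ,
    qBin (a + b + 1) (a + 1) = X ^ b * qBin (a + b) a + qBin (a + b) (a + 1)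
  | a, 0 => by simp [qBin_eq_zero_of_lt]
  | 0, b + 1 => by
    have ih := qBin_succ_succ' 0 b
    have h₁ := qBin_succ_succ (b + 1) 0
    have h₂ := qBin_succ_succ b 0
    simp only [zero_add, pow_one, qBin_zero_right, mul_one] at ih h₁ h₂ ⊢
    linear_combination h₁ + X * ih - h₂
  | a + 1, b + 1 => by
    have ih₁ := qBin_succ_succ' a (b + 1)
    have ih₂ := qBin_succ_succ' (a + 1) b
    simp only [← add_assoc, Nat.add_right_comm _ 1 b] at ih₁ ih₂ ⊢
    linear_combination qBin_succ_succ (a + b + 1 + 1) (a + 1) + ih₁ + X ^ (a + 2) * ih₂ -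
      X ^ (b + 1) * qBin_succ_succ (a + b + 1) a - qBin_succ_succ (a + b + 1) (a + 1)
termination_by a b => a + b

lemma qBin_add_symm : ∀ a b : ℕ, qBin (a + b) a = qBin (a + b) b
  | 0, b => by simp
  | a, 0 => by simp
  | a + 1, b + 1 => by
    have ih₁ := qBin_add_symm a (b + 1)
    have ih₂ := qBin_add_symm (a + 1) b
    have h := qBin_succ_succ' b (a + 1)
    simp only [← add_assoc, Nat.add_right_comm _ 1 b, Nat.add_comm b a] at ih₁ ih₂ h ⊢
    linear_combination qBin_succ_succ (a + b + 1) a + ih₁ + X ^ (a + 1) * ih₂ - h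
termination_by a b => a + b

lemma qBin_sub {n k : ℕ} (h : k ≤ n) : qBin n (n - k) = qBin n k := by
  obtain ⟨j, rfl⟩ := Nat.exists_eq_add_of_le h
  rw [Nat.add_sub_cancel_left, qBin_add_symm]

lemma compProd_append_singleton (l : List ℕ) (b : ℕ) :
    compProd (l ++ [b]) = compProd l * qBin (l.sum + b) b := by
  rw [compProd, List.length_append, List.length_singleton, prod_range_succ, compProd]
  congr 1
  · refine prod_congr rfl fun i hi => ?_
    rw [mem_range] at hi
    rw [List.take_append_of_le_length hi, List.getD_append _ _ _ _ hi]
  · rw [List.take_of_length_le (by simp), List.sum_append, List.sum_singleton,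
      List.getD_append_right _ _ _ _ le_rfl, Nat.sub_self, List.getD_cons_zero]

namespace Composition

variable {n : ℕ}

lemma sum_dropLast_add_getLast (c : Composition n) (h : c.blocks ≠ []) :
    c.blocks.dropLast.sum + c.blocks.getLast h = n := by
  conv_rhs => rw [← c.blocks_sum, ← List.dropLast_append_getLast h]
  rw [List.sum_append, List.sum_singleton]

lemma sum_dropLast_lt (c : Composition n) (hn : n ≠ 0) : c.blocks.dropLast.sum < n := by
  have h : c.blocks ≠ [] := mt c.blocks_eq_nil.1 hn
  have := c.blocks_pos (List.getLast_mem h)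
  have := c.sum_dropLast_add_getLast h
  omega

lemma dropLast_append_sub_sum (c : Composition n) (hn : n ≠ 0) :
    c.blocks.dropLast ++ [n - c.blocks.dropLast.sum] = c.blocks := by
  have h : c.blocks ≠ [] := mt c.blocks_eq_nil.1 hn
  have := c.sum_dropLast_add_getLast h
  rw [show n - c.blocks.dropLast.sum = c.blocks.getLast h by omega, List.dropLast_append_getLast]

def dropLast (c : Composition n) : Composition c.blocks.dropLast.sum where
  blocks := c.blocks.dropLast
  blocks_pos h := c.blocks_pos (List.dropLast_subset _ h)
  blocks_sum := rfl

def appendSingleton {k : ℕ} (c : Composition k) (hk : k < n) : Composition n where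
  blocks := c.blocks ++ [n - k]
  blocks_pos h := by
    rcases List.mem_append.1 h with h | h
    · exact c.blocks_pos h
    · rw [List.mem_singleton.1 h]
      omega
  blocks_sum := by rw [List.sum_append, c.blocks_sum, List.sum_singleton]; omega

theorem sum_eq_sum_range_append_singleton {M : Type*} [AddCommMonoid M] (f : List ℕ → M)
    (hn : n ≠ 0) :
    ∑ c : Composition n, f c.blocks =
      ∑ k ∈ range n, ∑ c : Composition k, f (c.blocks ++ [n - k]) := by
  rw [sum_sigma']
  refine sum_bij' (fun c _ => ⟨_, c.dropLast⟩) (fun p hp => p.2.appendSingleton ?_) ?_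
    (fun _ _ => mem_univ _) ?_ ?_ ?_
  · exact mem_range.1 (mem_sigma.1 hp).1
  · exact fun c _ => mem_sigma.2 ⟨mem_range.2 (c.sum_dropLast_lt hn), mem_univ _⟩
  · exact fun c _ => Composition.ext (c.dropLast_append_sub_sum hn)
  · exact fun p _ => sigma_eq_iff_blocks_eq.2 List.dropLast_concat
  · exact fun c _ => congrArg f (c.dropLast_append_sub_sum hn).symm

end Composition

/-- The sum `T n` of the composition formula with all weights `c_{b,s} = 1`. -/
noncomputable def compSum (n : ℕ) : ℤ[X] :=
  ∑ c : Composition n, compProd c.blocks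

lemma compSum_zero : compSum 0 = 1 := by
  have h (c : Composition 0) : c = Composition.ones 0 :=
    Composition.ext (by rw [c.blocks_eq_nil.2 rfl, (Composition.ones 0).blocks_eq_nil.2 rfl])
  rw [compSum, Fintype.sum_eq_single (Composition.ones 0) fun c hc => absurd (h c) hc]
  rfl

lemma compSum_eq_sum_range {n : ℕ} (hn : n ≠ 0) :
    compSum n = ∑ k ∈ range n, qBin n k * compSum k := by
  rw [compSum, Composition.sum_eq_sum_range_append_singleton _ hn]
  refine sum_congr rfl fun k hk => ?_
  rw [compSum, mul_sum]
  refine sum_congr rfl fun c _ => ?_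
  have hk : k ≤ n := (mem_range.1 hk).le
  rw [compProd_append_singleton, c.blocks_sum, Nat.add_sub_cancel' hk, qBin_sub hk, mul_comm]

/-- with all weights set to 1, the composition formula `T`
satisfies the q-Fubini recurrence `T 0 = 1`, `T n = ∑_{k<n} qBin n k * T k`,
hence equals the q-Fubini numbers. -/
theorem compSum_is_qFubini :
    (∑ c : Composition 0, compProd c.blocks) = 1 ∧
    (∀ n : ℕ, 1 ≤ n →
      (∑ c : Composition n, compProd c.blocks)
        = ∑ k ∈ Finset.range n, qBin n k * ∑ c : Composition k, compProd c.blocks) ∧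
    (∀ f : ℕ → Polynomial ℤ,
      f 0 = 1 →
      (∀ n : ℕ, 1 ≤ n → f n = ∑ k ∈ Finset.range n, qBin n k * f k) →
      ∀ n : ℕ, (∑ c : Composition n, compProd c.blocks) = f n) := by
  refine ⟨compSum_zero, fun n hn => compSum_eq_sum_range (by omega), ?_⟩
  intro f hf₀ hf n
  induction n using Nat.strong_induction_on with
  | _ n ih =>
    rcases Nat.eq_zero_or_pos n with rfl | hn
    · exact compSum_zero.trans hf₀.symm
    · rw [hf n hn]
      exact (compSum_eq_sum_range hn.ne').trans
        (sum_congr rfl fun k hk => congrArg _ (ih k (mem_range.1 hk)))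
end
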